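/- Let r ≥ 1 and let ξ = (ξ_0, …, ξ_r) ∈ ℝ^{r+1} with s = dim_ℚ Span_ℚ(ξ_0, …, ξ_r) − 1 ≥ 1. Then ω_0(ξ) ≥ 1/s, where ω_0(ξ) is the supremum of all ω > 0 such that there exist infinitely many tuples (q_0, …, q_r) ∈ ℤ^{r+1} with |q_i ξ_j − q_j ξ_i| ≤ max(|q_0|, …, |q_r|)^{−ω} for all 0 ≤ i < j ≤ r. -/

import Mathlib

open Filter Topology

/-- `ω_0(ξ)`: the supremum (in the extended reals) of all `ω > 0` such that there are
infinitely many integer tuples `q` with `|q_i ξ_j - q_j ξ_i| ≤ (max_k |q_k|)^{-ω}`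
for all `i < j`. -/
noncomputable def omega0 {n : ℕ} (ξ : Fin n → ℝ) : EReal :=
  sSup {x : EReal | ∃ ω : ℝ, 0 < ω ∧ x = (ω : EReal) ∧
    {q : Fin n → ℤ | ∀ i j : Fin n, i < j →
      |(q i : ℝ) * ξ j - (q j : ℝ) * ξ i| ≤
        ((Finset.univ.sup fun k => (q k).natAbs : ℕ) : ℝ) ^ (-ω)}.Infinite}

/-!
Write `ξ = e θ` with `e` an integer matrix and `θ₀, …, θₛ` linearly independent over `ℚ`.
Dirichlet's simultaneous approximation of `θ₁/θ₀, …, θₛ/θ₀` gives integers `P` with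
`0 < P₀ ≤ Nˢ` and `|P_k - t θ_k| ≤ 1/N` for `t = P₀/θ₀`, so `Q = e P` is within `O(1/N)` of `t ξ`
and every minor `Q_i ξ_j - Q_j ξ_i` is `O(1/N)`, while `|Q| = O(Nˢ)`. Hence these minors are
`O(|Q|^(-ω))` for every `ω < 1/s`, and since `θ₁/θ₀` is irrational, `P₀` and with it `|Q|`
is unbounded as `N → ∞`, which gives infinitely many such `Q`.
-/

theorem exists_pos_le_pow_abs_mul_sub_le {ι : Type*} [Fintype ι] (α : ι → ℝ) {N : ℕ}
    (hN : 0 < N) :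
    ∃ q : ℕ, 0 < q ∧ q ≤ N ^ Fintype.card ι ∧
      ∃ p : ι → ℤ, ∀ k, |q * α k - p k| ≤ 1 / N := by
  classical
  have hN' : (0 : ℝ) < N := by exact_mod_cast hN
  let box (m : ℕ) (k : ι) : ℤ := ⌊N * Int.fract (m * α k)⌋
  have hbox : Set.MapsTo box (Finset.range (N ^ Fintype.card ι + 1) : Set ℕ)
      (Fintype.piFinset fun _ : ι => Finset.Ico 0 (N : ℤ) : Set (ι → ℤ)) := by
    intro m _
    simp only [Finset.mem_coe, Fintype.mem_piFinset, Finset.mem_Ico, Int.floor_nonneg,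
      Int.floor_lt, box]
    intro k
    have := Int.fract_lt_one (m * α k)
    exact ⟨by positivity, by push_cast; nlinarith [Int.fract_nonneg (m * α k)]⟩
  obtain ⟨a, ha, b, hb, hab, hbox_eq⟩ := Finset.exists_ne_map_eq_of_card_lt_of_maps_to
    (by simp) hbox
  wlog hlt : a < b generalizing a b
  · exact this b hb a ha hab.symm hbox_eq.symm (by omega)
  refine ⟨b - a, by omega, by grind, fun k => ⌊b * α k⌋ - ⌊a * α k⌋, fun k => ?_⟩
  have hfract : ((b - a : ℕ) : ℝ) * α k - ((⌊b * α k⌋ - ⌊a * α k⌋ : ℤ) : ℝ) =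
      Int.fract (b * α k) - Int.fract (a * α k) := by
    rw [Nat.cast_sub hlt.le, Int.fract, Int.fract]; push_cast; ring
  have hclose := Int.abs_sub_lt_one_of_floor_eq_floor (congrFun hbox_eq k).symm
  rw [← mul_sub, abs_mul, abs_of_pos hN'] at hclose
  rw [hfract, le_div_iff₀ hN', mul_comm]
  exact hclose.le

theorem exists_abs_sub_div_mul_le {s : ℕ} {θ : Fin (s + 1) → ℝ} (hθ : θ 0 ≠ 0) {N : ℕ}
    (hN : 0 < N) :
    ∃ P : Fin (s + 1) → ℤ, 0 < P 0 ∧ P 0 ≤ N ^ s ∧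
      ∀ k, |P k - P 0 / θ 0 * θ k| ≤ 1 / N := by
  obtain ⟨q, hq, hqN, p, hp⟩ :=
    exists_pos_le_pow_abs_mul_sub_le (fun k : Fin s => θ k.succ / θ 0) hN
  rw [Fintype.card_fin] at hqN
  refine ⟨Fin.cons (q : ℤ) p, by simpa using hq, by rw [Fin.cons_zero]; exact_mod_cast hqN,
    Fin.cases ?_ fun k => ?_⟩
  · simp [hθ]
  · rw [abs_sub_comm]
    convert hp k using 3
    · simp only [Fin.cons_zero, Int.cast_natCast]
      ring
    · simp

theorem Irrational.eventually_lt_of_abs_mul_sub_le {α : ℝ} (hα : Irrational α) (M : ℤ) :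
    ∀ᶠ N : ℕ in atTop, ∀ q p : ℤ, 0 < q → |q * α - p| ≤ 1 / N → M < q := by
  have hsep : ∀ q ∈ Finset.Icc 1 M,
      ∀ᶠ N : ℕ in atTop, 1 / (N : ℝ) < |q * α - round (q * α)| :=
    fun q hq => tendsto_one_div_atTop_nhds_zero_nat.eventually <| gt_mem_nhds <| abs_pos.2 <|
      sub_ne_zero.2 <| (hα.intCast_mul (by grind)).ne_int _
  filter_upwards [(eventually_all_finset _).2 hsep] with N hN q p hq hqp
  by_contra! hqM
  have := hN q (Finset.mem_Icc.2 ⟨hq, hqM⟩)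
  linarith [round_le (q * α) p]

theorem LinearIndependent.irrational_div {ι : Type*} {θ : ι → ℝ}
    (hθ : LinearIndependent ℚ θ) {i j : ι} (hij : i ≠ j) : Irrational (θ j / θ i) := by
  rintro ⟨a, ha⟩
  have hinj : Function.Injective ![i, j] := by
    intro x y; fin_cases x <;> fin_cases y <;> simp [hij, hij.symm]
  have hpair : LinearIndependent ℚ ![θ i, θ j] := by
    convert hθ.comp _ hinj using 1
    ext x; fin_cases x <;> rfl
  have := (hpair.eq_zero_of_pair' (s := a) (t := 1) ?_).2
  · exact one_ne_zero this
  · rw [Rat.smul_def, ha, div_mul_cancel₀ _ (hθ.ne_zero i), one_smul]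

theorem exists_linearIndependent_eq_sum_zsmul {M ι : Type*} [AddCommGroup M] [Module ℚ M]
    [Fintype ι] (ξ : ι → M) {n : ℕ} (hn : Module.finrank ℚ (Submodule.span ℚ (Set.range ξ)) = n) :
    ∃ θ : Fin n → M, LinearIndependent ℚ θ ∧ ∃ e : ι → Fin n → ℤ,
      ∀ j, ξ j = ∑ k, e j k • θ k := by
  set V := Submodule.span ℚ (Set.range ξ)
  have : FiniteDimensional ℚ V := FiniteDimensional.span_of_finite ℚ (Set.finite_range ξ)
  let B := Module.finBasisOfFinrankEq ℚ V hn
  let c (jk : ι × Fin n) : ℚ :=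
    B.repr ⟨ξ jk.1, Submodule.subset_span ⟨jk.1, rfl⟩⟩ jk.2
  obtain ⟨⟨d, hd⟩, hdc⟩ :=
    IsLocalization.exist_integer_multiples_of_finite (nonZeroDivisors ℤ) c
  choose e he using hdc
  have hd0 : (d : ℚ) ≠ 0 := by exact_mod_cast nonZeroDivisors.ne_zero hd
  -- dividing the basis by a common denominator `d` of the coordinates makes them integral
  refine ⟨fun k => (d : ℚ)⁻¹ • (B k : M), ?_, fun j k => e (j, k), fun j => ?_⟩
  · exact (B.linearIndependent.map' V.subtype V.ker_subtype).units_smul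
      fun _ => Units.mk0 _ (inv_ne_zero hd0)
  · have hξ := congrArg Subtype.val (B.sum_repr ⟨ξ j, Submodule.subset_span ⟨j, rfl⟩⟩)
    rw [Submodule.coe_sum] at hξ
    refine hξ.symm.trans ?_
    refine Finset.sum_congr rfl fun k _ => ?_
    have hek : (e (j, k) : ℚ) = d * c (j, k) := he (j, k)
    rw [Submodule.coe_smul, ← Int.cast_smul_eq_zsmul ℚ, smul_smul, hek, mul_comm (d : ℚ),
      mul_assoc, mul_inv_cancel₀ hd0, mul_one]

theorem eventually_div_le_mul_pow_rpow_neg {s : ℕ} {ω : ℝ} (hω : ω * s < 1) (C₁ : ℝ)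
    {C₂ : ℝ} (hC₂ : 0 < C₂) : ∀ᶠ N : ℝ in atTop, C₁ / N ≤ (C₂ * N ^ s) ^ (-ω) := by
  have hlim : Tendsto (fun N : ℝ => N ^ (1 - ω * s)) atTop atTop :=
    tendsto_rpow_atTop (by linarith)
  filter_upwards [hlim.eventually_ge_atTop (C₁ * C₂ ^ ω), eventually_gt_atTop 0] with N hN hN0
  rw [Real.mul_rpow hC₂.le (by positivity), ← Real.rpow_natCast, ← Real.rpow_mul hN0.le,
    div_le_iff₀ hN0]
  calc C₁ = C₂ ^ (-ω) * (C₁ * C₂ ^ ω) := by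
        rw [Real.rpow_neg hC₂.le]; field_simp
    _ ≤ C₂ ^ (-ω) * N ^ (1 - ω * s) := by gcongr
    _ = C₂ ^ (-ω) * N ^ (s * -ω) * N := by
        rw [mul_assoc, ← Real.rpow_add_one hN0.ne']; ring_nf

theorem abs_mul_sub_mul_le {a b c d t ε : ℝ} (hab : |a - t * b| ≤ ε)
    (hcd : |c - t * d| ≤ ε) :
    |a * d - c * b| ≤ ε * (|b| + |d|) :=
  calc |a * d - c * b| = |(a - t * b) * d - (c - t * d) * b| := by ring_nf
    _ ≤ |a - t * b| * |d| + |c - t * d| * |b| := by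
        rw [← abs_mul, ← abs_mul]; exact abs_sub _ _
    _ ≤ ε * |d| + ε * |b| := by gcongr
    _ = ε * (|b| + |d|) := by ring

theorem abs_sum_mul_sub_mul_sum_le {ι : Type*} (u : Finset ι) (e x θ : ι → ℝ) {t ε : ℝ}
    (h : ∀ k, |x k - t * θ k| ≤ ε) :
    |∑ k ∈ u, e k * x k - t * ∑ k ∈ u, e k * θ k| ≤ (∑ k ∈ u, |e k|) * ε :=
  calc |∑ k ∈ u, e k * x k - t * ∑ k ∈ u, e k * θ k|
        = |∑ k ∈ u, e k * (x k - t * θ k)| := by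
        rw [Finset.mul_sum, ← Finset.sum_sub_distrib]
        congr 1; exact Finset.sum_congr rfl fun k _ => by ring
    _ ≤ ∑ k ∈ u, |e k| * ε := by
        refine (Finset.abs_sum_le_sum_abs _ _).trans (Finset.sum_le_sum fun k _ => ?_)
        rw [abs_mul]; gcongr; exact h k
    _ = (∑ k ∈ u, |e k|) * ε := (Finset.sum_mul _ _ _).symm

def ApproxByIntVectors {ι : Type*} (ξ : ι → ℝ) (s : ℕ) (C : ℝ) : Prop :=
  ∀ L : ℝ, ∀ᶠ N : ℕ in atTop, ∃ Q : ι → ℤ, ∃ t : ℝ,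
    L ≤ |t| ∧ |t| ≤ C * N ^ s ∧ ∀ j, |Q j - t * ξ j| ≤ C / N

section Approximation

variable {n : ℕ}

def height (q : Fin n → ℤ) : ℕ :=
  Finset.univ.sup fun k => (q k).natAbs

theorem abs_le_height (q : Fin n → ℤ) (k : Fin n) : |(q k : ℝ)| ≤ height q := by
  rw [← Int.cast_abs, ← Int.natCast_natAbs, Int.cast_natCast, Nat.cast_le]
  exact Finset.le_sup (f := fun k => (q k).natAbs) (Finset.mem_univ k)

theorem height_le_of_forall_abs_le {q : Fin n → ℤ} {B : ℝ} (hB : 0 ≤ B)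
    (h : ∀ k, |(q k : ℝ)| ≤ B) : (height q : ℝ) ≤ B := by
  refine (Nat.cast_le.2 (Finset.sup_le fun k _ => (Nat.le_floor_iff hB).2 ?_)).trans
    (Nat.floor_le hB)
  rw [Nat.cast_natAbs, Int.cast_abs]
  exact h k

def approxSet (ξ : Fin n → ℝ) (ω : ℝ) : Set (Fin n → ℤ) :=
  {q | ∀ i j, i < j → |(q i : ℝ) * ξ j - (q j : ℝ) * ξ i| ≤ (height q : ℝ) ^ (-ω)}

theorem coe_le_omega0 {ξ : Fin n → ℝ} {ω : ℝ} (hω : 0 < ω) (h : (approxSet ξ ω).Infinite) :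
    (ω : EReal) ≤ omega0 ξ :=
  le_sSup ⟨ω, hω, rfl, h⟩

theorem ApproxByIntVectors.approxSet_infinite {s : ℕ} {ξ : Fin n → ℝ} {C : ℝ}
    (happrox : ApproxByIntVectors ξ s C) (hC : 0 < C) {j₀ : Fin n} (hj₀ : ξ j₀ ≠ 0) {ω : ℝ}
    (hω₀ : 0 ≤ ω) (hω : ω * s < 1) : (approxSet ξ ω).Infinite := by
  set X := ∑ j, |ξ j|
  have hX : ∀ j, |ξ j| ≤ X := fun j =>
    Finset.single_le_sum (f := fun j => |ξ j|) (fun j _ => abs_nonneg _) (Finset.mem_univ j)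
  refine Set.Infinite.of_image height (Set.infinite_of_forall_exists_gt fun M => ?_)
  obtain ⟨N, hN, hexp, Q, t, hLt, htC, hQ⟩ := ((eventually_ge_atTop 1).and
    ((tendsto_natCast_atTop_atTop.eventually
      (eventually_div_le_mul_pow_rpow_neg hω (C * (2 * X)) (C₂ := C * (X + 1))
        (by positivity))).and
    (happrox ((M + 1 + C) / |ξ j₀|)))).exists
  have hN' : (1 : ℝ) ≤ N := by exact_mod_cast hN
  have hNs : (1 : ℝ) ≤ N ^ s := one_le_pow₀ hN'
  have herr : C / N ≤ C := div_le_self hC.le hN'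
  have hQ_le : ∀ j, |(Q j : ℝ)| ≤ C * (X + 1) * N ^ s := fun j =>
    calc |(Q j : ℝ)| ≤ |t| * |ξ j| + C / N := by
          have := abs_sub_abs_le_abs_sub (Q j : ℝ) (t * ξ j)
          rw [abs_mul] at this; linarith [hQ j]
      _ ≤ C * N ^ s * X + C * N ^ s := by
          gcongr
          exacts [hX j, herr.trans (le_mul_of_one_le_right hC.le hNs)]
      _ = C * (X + 1) * N ^ s := by ring
  have hM : (M : ℝ) < height Q :=
    calc (M : ℝ) < |t| * |ξ j₀| - C / N := by
          rw [div_le_iff₀ (abs_pos.2 hj₀)] at hLt; linarith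
      _ ≤ |(Q j₀ : ℝ)| := by
          have := abs_sub_abs_le_abs_sub (t * ξ j₀) (Q j₀ : ℝ)
          rw [abs_mul, abs_sub_comm] at this; linarith [hQ j₀]
      _ ≤ height Q := abs_le_height Q j₀
  have hH : (0 : ℝ) < height Q := (Nat.cast_nonneg M).trans_lt hM
  refine ⟨height Q, ⟨Q, fun i j _ => ?_, rfl⟩, by exact_mod_cast hM⟩
  calc |(Q i : ℝ) * ξ j - (Q j : ℝ) * ξ i| ≤ C / N * (|ξ i| + |ξ j|) :=
        abs_mul_sub_mul_le (hQ i) (hQ j)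
    _ ≤ C * (2 * X) / N := by
        rw [mul_div_right_comm]; gcongr; linarith [hX i, hX j]
    _ ≤ (C * (X + 1) * N ^ s) ^ (-ω) := hexp
    _ ≤ (height Q : ℝ) ^ (-ω) :=
        Real.rpow_le_rpow_of_nonpos hH (height_le_of_forall_abs_le (by positivity) hQ_le)
          (neg_nonpos.2 hω₀)

end Approximation

theorem exists_approxByIntVectors {ι : Type*} [Fintype ι] {s : ℕ} (hs : 0 < s)
    {θ : Fin (s + 1) → ℝ} (hθ : LinearIndependent ℚ θ) {ξ : ι → ℝ} (e : ι → Fin (s + 1) → ℤ)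
    (hξ : ∀ j, ξ j = ∑ k, e j k * θ k) : ∃ C > 0, ApproxByIntVectors ξ s C := by
  have hθ₀ : θ 0 ≠ 0 := hθ.ne_zero 0
  have hθ₀' : 0 < |θ 0| := abs_pos.2 hθ₀
  set E := ∑ j, ∑ k, |(e j k : ℝ)|
  have hE : ∀ j, ∑ k, |(e j k : ℝ)| ≤ E := fun j =>
    Finset.single_le_sum (f := fun j => ∑ k, |(e j k : ℝ)|)
      (fun j _ => Finset.sum_nonneg fun k _ => abs_nonneg _) (Finset.mem_univ j)
  have hE₀ : 0 ≤ E := Finset.sum_nonneg fun j _ => Finset.sum_nonneg fun k _ => abs_nonneg _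
  refine ⟨E + 1 / |θ 0|, by positivity, fun L => ?_⟩
  have hirr := hθ.irrational_div (Fin.succ_ne_zero (⟨0, hs⟩ : Fin s)).symm
  filter_upwards [eventually_gt_atTop 0, hirr.eventually_lt_of_abs_mul_sub_le ⌈L * |θ 0|⌉]
    with N hN hlarge
  obtain ⟨P, hP₀, hPN, hP⟩ := exists_abs_sub_div_mul_le hθ₀ hN
  have hN' : (0 : ℝ) < N := by exact_mod_cast hN
  have ht : |(P 0 / θ 0 : ℝ)| = P 0 / |θ 0| := by
    rw [abs_div, abs_of_pos (by exact_mod_cast hP₀ : (0 : ℝ) < P 0)]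
  refine ⟨fun j => ∑ k, e j k * P k, P 0 / θ 0, ?_, ?_, fun j => ?_⟩
  · have hP₁ := hP (Fin.succ ⟨0, hs⟩)
    rw [abs_sub_comm, div_mul_eq_mul_div, mul_div_assoc] at hP₁
    have := hlarge (P 0) _ hP₀ hP₁
    rw [ht, le_div_iff₀ hθ₀']
    exact (Int.le_ceil _).trans (by exact_mod_cast this.le)
  · rw [ht, div_le_iff₀ hθ₀']
    calc (P 0 : ℝ) ≤ N ^ s := by exact_mod_cast hPN
      _ ≤ (E + 1 / |θ 0|) * N ^ s * |θ 0| := by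
          rw [mul_right_comm, add_mul, one_div_mul_cancel hθ₀'.ne']
          nlinarith [mul_nonneg hE₀ hθ₀'.le, pow_nonneg hN'.le s]
  · rw [hξ]
    push_cast
    calc _ ≤ (∑ k, |(e j k : ℝ)|) * (1 / N) :=
          abs_sum_mul_sub_mul_sum_le _ _ _ _ hP
      _ ≤ E * (1 / N) := by gcongr; exact hE j
      _ ≤ (E + 1 / |θ 0|) / N := by
          rw [mul_one_div]; gcongr; linarith [one_div_pos.2 hθ₀']

theorem one_div_s_le_omega0_general (r : ℕ) (ξ : Fin (r + 1) → ℝ)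
    (s : ℕ) (hs : s + 1 = Module.finrank ℚ ↥(Submodule.span ℚ (Set.range ξ)))
    (hs1 : 1 ≤ s) :
    ((1 / s : ℝ) : EReal) ≤ omega0 ξ := by
  obtain ⟨θ, hθ, e, hξ⟩ := exists_linearIndependent_eq_sum_zsmul ξ hs.symm
  simp only [zsmul_eq_mul] at hξ
  obtain ⟨C, hC, happrox⟩ := exists_approxByIntVectors hs1 hθ e hξ
  obtain ⟨j₀, hj₀⟩ : ∃ j₀, ξ j₀ ≠ 0 := by
    by_contra! h
    have : Submodule.span ℚ (Set.range ξ) = ⊥ := Submodule.span_eq_bot.2 (by grind)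
    rw [this, finrank_bot] at hs
    omega
  refine le_of_forall_lt_imp_le_of_dense fun c hc => ?_
  obtain ⟨ω, hcω, hω⟩ :=
    EReal.lt_iff_exists_real_btwn.1 (max_lt hc (EReal.coe_pos.2 (by positivity)))
  have hω₀ : 0 < ω := EReal.coe_pos.1 ((le_max_right _ _).trans_lt hcω)
  have hωs : ω * s < 1 := (lt_div_iff₀ (by positivity)).1 (EReal.coe_lt_coe_iff.1 hω)
  exact (le_max_left _ _).trans <| hcω.le.trans <|
    coe_le_omega0 hω₀ (happrox.approxSet_infinite hC hj₀ hω₀.le hωs)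

theorem one_div_s_le_omega0 (r : ℕ) (hr : 1 ≤ r) (ξ : Fin (r + 1) → ℝ)
    (s : ℕ) (hs : s + 1 = Module.finrank ℚ ↥(Submodule.span ℚ (Set.range ξ)))
    (hs1 : 1 ≤ s) :
    ((1 / s : ℝ) : EReal) ≤ omega0 ξ :=
  one_div_s_le_omega0_general r ξ s hs hs1
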